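/- For relatively prime positive integers s and t, the sequence a_{s,t}(n) satisfies, for n > s+t, the recurrence a_{s,t}(n) = a_{s,t}(n − s − t) + Σ_{r=0}^{s−1} a_{s,t}(n − r − ⌈(r·t+1)/s⌉). -/

import Mathlib

/-- `l` is a composition of `n`: a list of positive integers summing to `n`. -/
def IsComposition (n : ℕ) (l : List ℕ) : Prop := (∀ x ∈ l, 0 < x) ∧ l.sum = n

/-- The scaled Arndt condition: `s * c_{2i-1} > t * c_{2i}` for each pair
(0-indexed: `s * l[2i] > t * l[2i+1]`). -/
def ArndtCond (s t : ℕ) (l : List ℕ) : Prop :=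
  ∀ i : ℕ, 2 * i + 1 < l.length → t * l[2 * i + 1]! < s * l[2 * i]!

/-- `a_{s,t}(n)`: the number of scaled Arndt compositions of `n`. -/
noncomputable def arndtCount (s t n : ℕ) : ℕ :=
  Nat.card {l : List ℕ // IsComposition n l ∧ ArndtCond s t l}

/-- Number of compositions of `n` with all parts in the set `A`. -/
noncomputable def compCount (A : Set ℕ) (n : ℕ) : ℕ :=
  Nat.card {l : List ℕ // IsComposition n l ∧ ∀ x ∈ l, x ∈ A}

/-!
Write `g c = c + ⌊t c / s⌋ + 1`. An Arndt composition of `n` is either `[n]` or starts with a pair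
`(x, c)` with `t c < s x`, i.e. `x + c ≥ g c`, followed by an Arndt composition of `n - x - c`.
Summing over `x` first gives `a n = 1 + Σ_{c ≥ 1} Σ_{k ≤ n - g c} a k`, so the first difference is
`a n - a (n - 1) = u n := Σ_{c ≥ 1, g c ≤ n} a (n - g c)`. Since `g (c + s) = g c + (s + t)`, the
terms of `u n` with `c > s` are exactly those of `u (n - (s + t))`, whence
`u n - u (n - (s + t)) = Σ_{c = 1}^{s} a (n - g c)`. The term `c = s` equals `a (n - (s + t) - 1)` and
cancels against the first difference at `n - (s + t)`; finally `g 0 = 1` and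
`g r = r + ⌈(r t + 1) / s⌉`.
-/

open Finset

variable {s t : ℕ}

lemma arndtCond_nil : ArndtCond s t [] := by
  intro i hi
  simp at hi

lemma arndtCond_singleton (x : ℕ) : ArndtCond s t [x] := by
  intro i hi
  simp at hi

lemma arndtCond_cons_cons {x y : ℕ} {l : List ℕ} :
    ArndtCond s t (x :: y :: l) ↔ t * y < s * x ∧ ArndtCond s t l := by
  constructor
  · intro h
    exact ⟨by simpa using h 0 (by simp),
      fun i hi => by simpa [Nat.mul_succ] using h (i + 1) (by simp; omega)⟩
  · rintro ⟨hxy, hl⟩ (_ | i) hi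
    · simpa using hxy
    · simpa [Nat.mul_succ] using hl i (by simp at hi; omega)

variable (s t) in
lemma setOf_arndt_finite (n : ℕ) :
    {l : List ℕ | IsComposition n l ∧ ArndtCond s t l}.Finite :=
  Set.finite_coe_iff.1 <| Finite.of_injective
    (fun l => (⟨l.1, fun hi => l.2.1.1 _ hi, l.2.1.2⟩ : Composition n))
    fun _ _ h => Subtype.ext (congrArg Composition.blocks h)

variable (s t) in
noncomputable def arndtFinset (n : ℕ) : Finset (List ℕ) := (setOf_arndt_finite s t n).toFinset

lemma mem_arndtFinset {n : ℕ} {l : List ℕ} :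
    l ∈ arndtFinset s t n ↔ IsComposition n l ∧ ArndtCond s t l := by
  simp [arndtFinset]

lemma arndtCount_eq_card (n : ℕ) : arndtCount s t n = #(arndtFinset s t n) := by
  rw [arndtCount, ← Set.coe_ofPred, Nat.card_coe_set_eq,
    Set.ncard_eq_toFinset_card _ (setOf_arndt_finite s t n), arndtFinset]

lemma arndtCount_zero : arndtCount s t 0 = 1 := by
  rw [arndtCount_eq_card, card_eq_one]
  refine ⟨[], eq_singleton_iff_unique_mem.2 ⟨mem_arndtFinset.2 ⟨⟨by simp, rfl⟩, arndtCond_nil⟩, ?_⟩⟩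
  intro l hl
  obtain ⟨⟨hpos, hsum⟩, -⟩ := mem_arndtFinset.1 hl
  cases l with
  | nil => rfl
  | cons x l =>
    have := hpos x (by simp)
    simp at hsum
    omega

variable (s t) in
def firstPairs (n : ℕ) : Finset (ℕ × ℕ) :=
  (Icc 1 n ×ˢ Icc 1 n).filter fun p => t * p.2 < s * p.1 ∧ p.1 + p.2 ≤ n

lemma arndtFinset_eq_insert_biUnion {n : ℕ} (hn : 0 < n) :
    arndtFinset s t n = insert [n] ((firstPairs s t n).biUnion fun p =>
      (arndtFinset s t (n - p.1 - p.2)).image (p.1 :: p.2 :: ·)) := by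
  ext l
  simp only [mem_arndtFinset, mem_insert, mem_biUnion, mem_image, firstPairs, mem_filter,
    mem_product, mem_Icc, IsComposition]
  constructor
  · rintro ⟨⟨hpos, hsum⟩, hl⟩
    match l with
    | [] => simp at hsum; omega
    | [x] => simp at hsum; simp [hsum]
    | x :: y :: l =>
      have hx := hpos x (by simp)
      have hy := hpos y (by simp)
      obtain ⟨hxy, hl⟩ := arndtCond_cons_cons.1 hl
      simp only [List.sum_cons] at hsum
      exact Or.inr ⟨(x, y), ⟨⟨⟨hx, by omega⟩, hy, by omega⟩, hxy, by omega⟩, l,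
        ⟨⟨fun z hz => hpos z (by simp [hz]), by omega⟩, hl⟩, rfl⟩
  · rintro (rfl | ⟨⟨x, y⟩, ⟨⟨⟨hx, -⟩, hy, -⟩, hxy, hle⟩, l, ⟨⟨hpos, hsum⟩, hl⟩, rfl⟩)
    · exact ⟨⟨by simpa using hn, by simp⟩, arndtCond_singleton n⟩
    · refine ⟨⟨?_, ?_⟩, arndtCond_cons_cons.2 ⟨hxy, hl⟩⟩
      · rintro z (_ | ⟨_, _ | ⟨_, hz⟩⟩)
        exacts [hx, hy, hpos z hz]
      · simp only [List.sum_cons, hsum]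
        omega

lemma arndtCount_eq_one_add_sum_firstPairs (n : ℕ) :
    arndtCount s t n = 1 + ∑ p ∈ firstPairs s t n, arndtCount s t (n - p.1 - p.2) := by
  rcases Nat.eq_zero_or_pos n with rfl | hn
  · simp [arndtCount_zero, firstPairs]
  have hdisj : ((firstPairs s t n : Set (ℕ × ℕ))).PairwiseDisjoint fun p =>
      (arndtFinset s t (n - p.1 - p.2)).image (p.1 :: p.2 :: ·) := by
    intro p _ q _ hpq
    refine disjoint_left.2 fun l hp hq => hpq ?_
    obtain ⟨_, -, rfl⟩ := mem_image.1 hp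
    obtain ⟨_, -, h⟩ := mem_image.1 hq
    simp only [List.cons.injEq] at h
    exact (Prod.ext h.1 h.2.1).symm
  have hnotMem : [n] ∉ (firstPairs s t n).biUnion fun p =>
      (arndtFinset s t (n - p.1 - p.2)).image (p.1 :: p.2 :: ·) := by
    simp
  rw [arndtCount_eq_card, arndtFinset_eq_insert_biUnion hn, card_insert_of_notMem hnotMem,
    card_biUnion hdisj, add_comm]
  congr 1
  refine sum_congr rfl fun p _ => ?_
  rw [card_image_of_injective _ fun _ _ h => by simpa using h, arndtCount_eq_card]

-- `g` of the proof sketch.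
variable (s t) in
def minPairSum (c : ℕ) : ℕ := c + t * c / s + 1

lemma minPairSum_le_add_iff (hs : 0 < s) {c x : ℕ} :
    minPairSum s t c ≤ x + c ↔ t * c < s * x := by
  rw [minPairSum, mul_comm s, ← Nat.div_lt_iff_lt_mul hs]
  omega

variable (s t) in
lemma lt_minPairSum (c : ℕ) : c < minPairSum s t c :=
  Nat.lt_succ_of_le (Nat.le_add_right c _)

variable (s t) in
lemma minPairSum_mono : Monotone (minPairSum s t) := fun _ _ h =>
  Nat.add_le_add_right (Nat.add_le_add h (Nat.div_le_div_right (Nat.mul_le_mul_left t h))) 1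

variable (s t) in
lemma minPairSum_zero : minPairSum s t 0 = 1 := by
  simp [minPairSum]

lemma minPairSum_add_self (hs : 0 < s) (c : ℕ) :
    minPairSum s t (c + s) = minPairSum s t c + (s + t) := by
  rw [minPairSum, minPairSum, mul_add, Nat.add_mul_div_right _ _ hs]
  ring

lemma minPairSum_self (hs : 0 < s) : minPairSum s t s = s + t + 1 := by
  simpa [minPairSum_zero, add_comm] using minPairSum_add_self (t := t) hs 0

lemma add_ceilDiv_eq_minPairSum (hs : 0 < s) (r : ℕ) :
    r + (r * t + 1) ⌈/⌉ s = minPairSum s t r := by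
  rw [Nat.ceilDiv_eq_add_pred_div, show r * t + 1 + s - 1 = t * r + s by rw [mul_comm]; omega,
    Nat.add_div_right _ hs, minPairSum, add_assoc]

section Convolution

variable {M : Type*} [AddCommMonoid M]

lemma sum_filter_firstPart_eq_sum_range (hs : 0 < s) (f : ℕ → M) (n c : ℕ) :
    ∑ x ∈ Icc 1 n with t * c < s * x ∧ x + c ≤ n, f (n - x - c) =
      ∑ k ∈ range (n + 1 - minPairSum s t c), f k := by
  have hc := lt_minPairSum s t c
  refine sum_nbij' (fun x => n - x - c) (fun k => n - c - k) ?_ ?_ ?_ ?_ fun _ _ => rfl <;>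
    intro a ha <;>
    simp only [mem_filter, mem_Icc, mem_range, ← minPairSum_le_add_iff hs] at ha ⊢ <;>
    omega

lemma sum_firstPairs_eq_sum_range (hs : 0 < s) (f : ℕ → M) (n : ℕ) :
    ∑ p ∈ firstPairs s t n, f (n - p.1 - p.2) =
      ∑ c ∈ range n, ∑ k ∈ range (n + 1 - minPairSum s t (c + 1)), f k := by
  rw [firstPairs, sum_filter, sum_product_right, ← Ico_add_one_right_eq_Icc, sum_Ico_eq_sum_range,
    Nat.add_sub_cancel]
  refine sum_congr rfl fun c _ => ?_
  rw [Ico_add_one_right_eq_Icc, ← sum_filter, add_comm 1 c, sum_filter_firstPart_eq_sum_range hs]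

-- `u` of the proof sketch, with the summation index shifted: `c` stands for the part `c + 1`.
variable (s t) in
def minPairSumConv (f : ℕ → M) (n : ℕ) : M :=
  ∑ c ∈ range n, if minPairSum s t (c + 1) ≤ n then f (n - minPairSum s t (c + 1)) else 0

lemma sum_range_ite_eq_minPairSumConv (f : ℕ → M) {n N : ℕ} (h : n ≤ N) :
    ∑ c ∈ range N, (if minPairSum s t (c + 1) ≤ n then f (n - minPairSum s t (c + 1)) else 0) =
      minPairSumConv s t f n := by
  refine (sum_subset (range_subset_range.2 h) fun c _ hc => if_neg ?_).symm
  have := lt_minPairSum s t (c + 1)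
  simp only [mem_range] at hc
  omega

lemma sum_range_partialSum_succ (f : ℕ → M) (n : ℕ) :
    ∑ c ∈ range (n + 1), ∑ k ∈ range (n + 2 - minPairSum s t (c + 1)), f k =
      ∑ c ∈ range n, ∑ k ∈ range (n + 1 - minPairSum s t (c + 1)), f k +
        minPairSumConv s t f (n + 1) := by
  have hlast : ∑ k ∈ range (n + 1 - minPairSum s t (n + 1)), f k = 0 := by
    rw [Nat.sub_eq_zero_of_le (lt_minPairSum s t (n + 1)).le, sum_range_zero]
  rw [← add_zero (∑ c ∈ range n, _), ← hlast, ← sum_range_succ (fun c =>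
    ∑ k ∈ range (n + 1 - minPairSum s t (c + 1)), f k), minPairSumConv, ← sum_add_distrib]
  refine sum_congr rfl fun c _ => ?_
  split_ifs with h
  · rw [show n + 2 - minPairSum s t (c + 1) = n + 1 - minPairSum s t (c + 1) + 1 by omega,
      sum_range_succ]
  · rw [Nat.sub_eq_zero_of_le (by omega : n + 2 ≤ minPairSum s t (c + 1)),
      Nat.sub_eq_zero_of_le (by omega : n + 1 ≤ minPairSum s t (c + 1))]
    simp

lemma minPairSumConv_eq_add (hs : 0 < s) (f : ℕ → M) {n : ℕ} (hn : s + t < n) :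
    minPairSumConv s t f n =
      ∑ c ∈ range s, f (n - minPairSum s t (c + 1)) + minPairSumConv s t f (n - (s + t)) := by
  obtain ⟨m, rfl⟩ : ∃ m, n = s + m := ⟨n - s, by omega⟩
  have hlow : ∀ c < s, minPairSum s t (c + 1) ≤ s + m := fun c hc =>
    (minPairSum_mono s t (by omega : c + 1 ≤ s)).trans (by rw [minPairSum_self hs]; omega)
  rw [minPairSumConv, sum_range_add,
    ← sum_range_ite_eq_minPairSumConv f (by omega : s + m - (s + t) ≤ m)]
  congr 1
  · exact sum_congr rfl fun c hc => if_pos (hlow c (mem_range.1 hc))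
  · refine sum_congr rfl fun c _ => ?_
    rw [show s + c + 1 = c + 1 + s by ring, minPairSum_add_self hs]
    exact if_congr (by omega) (congrArg f (by omega)) rfl

end Convolution

lemma arndtCount_eq_one_add_sum_range (hs : 0 < s) (n : ℕ) :
    arndtCount s t n = 1 + ∑ c ∈ range n,
      ∑ k ∈ range (n + 1 - minPairSum s t (c + 1)), arndtCount s t k := by
  rw [arndtCount_eq_one_add_sum_firstPairs, sum_firstPairs_eq_sum_range hs]

lemma arndtCount_succ (hs : 0 < s) (n : ℕ) :
    arndtCount s t (n + 1) = arndtCount s t n + minPairSumConv s t (arndtCount s t) (n + 1) := by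
  rw [arndtCount_eq_one_add_sum_range hs, sum_range_partialSum_succ,
    arndtCount_eq_one_add_sum_range hs n, add_assoc]

theorem arndt_recurrence_general (s t n : ℕ) (hs : 0 < s)
    (hn : s + t < n) :
    arndtCount s t n =
      arndtCount s t (n - (s + t)) +
        ∑ r ∈ Finset.range s, arndtCount s t (n - (r + (r * t + 1) ⌈/⌉ s)) := by
  set a := arndtCount s t
  have hstep_n : a n = a (n - 1) + minPairSumConv s t a n := by
    simpa [Nat.sub_add_cancel (by omega : 1 ≤ n)] using arndtCount_succ (t := t) hs (n - 1)
  have hstep_shift :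
      a (n - (s + t)) = a (n - (s + t) - 1) + minPairSumConv s t a (n - (s + t)) := by
    simpa [Nat.sub_add_cancel (by omega : 1 ≤ n - (s + t))] using
      arndtCount_succ (t := t) hs (n - (s + t) - 1)
  have hconv := minPairSumConv_eq_add hs a hn
  have hends : ∑ r ∈ range s, a (n - minPairSum s t r) + a (n - (s + t) - 1) =
      a (n - 1) + ∑ c ∈ range s, a (n - minPairSum s t (c + 1)) := by
    calc _ = ∑ r ∈ range (s + 1), a (n - minPairSum s t r) := by
          rw [sum_range_succ, minPairSum_self hs, Nat.sub_sub]
      _ = _ := by rw [sum_range_succ', minPairSum_zero, add_comm]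
  simp only [add_ceilDiv_eq_minPairSum hs]
  omega

theorem arndt_recurrence (s t n : ℕ) (hs : 0 < s) (ht : 0 < t)
    (hco : Nat.Coprime s t) (hn : s + t < n) :
    arndtCount s t n =
      arndtCount s t (n - (s + t)) +
        ∑ r ∈ Finset.range s, arndtCount s t (n - (r + (r * t + 1) ⌈/⌉ s)) :=
  arndt_recurrence_general s t n hs hn
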